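/- Let C = (c_{ij}) be an invertible 2×2 complex matrix, and let λ, μ, λ̃, μ̃ > 0. Suppose there exist m₁, m₂ > 0 such that for all n ∈ ℕ, m₁·diag((λ)ₙ, (μ)ₙ) ≤ C·diag((λ̃)ₙ, (μ̃)ₙ)·C* ≤ m₂·diag((λ)ₙ, (μ)ₙ) in the Loewner order, where (x)ₙ is the Pochhammer symbol. Then {λ, μ} = {λ̃, μ̃} as multisets. -/

import Mathlib

open scoped Matrix ComplexOrder
/-- Pochhammer symbol `(x)ₙ = Γ(x+n)/Γ(x)`. -/
noncomputable def poch (x : ℝ) (n : ℕ) : ℝ := Real.Gamma (x + n) / Real.Gamma x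

/-!
The diagonal entries of `m₁ D(n) ≤ C D̃(n) Cᴴ ≤ m₂ D(n)` give
`m₁ (λ)ₙ ≤ |c₁₁|² (λ̃)ₙ + |c₁₂|² (μ̃)ₙ ≤ m₂ (λ)ₙ`, and similarly for `μ`. Since
`(x)ₙ / (y)ₙ ~ n^(x - y) Γ(y) / Γ(x)` and a row of an invertible matrix is nonzero, such bounds
force `λ` to be the largest of `λ̃, μ̃` carrying a nonzero coefficient; so `λ, μ ∈ {λ̃, μ̃}`.
Conjugating by `C⁻¹` swaps the roles of the two diagonals, giving `λ̃, μ̃ ∈ {λ, μ}`, and for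
two-element multisets mutual membership is equality.
-/

open Filter Topology Finset
open scoped Nat

section Pochhammer

variable {x y : ℝ}

lemma poch_zero (hx : 0 < x) : poch x 0 = 1 := by
  simp [poch, (Real.Gamma_pos_of_pos hx).ne']

lemma poch_pos (hx : 0 < x) (n : ℕ) : 0 < poch x n :=
  div_pos (Real.Gamma_pos_of_pos (by positivity)) (Real.Gamma_pos_of_pos hx)

lemma poch_succ (hx : 0 < x) (n : ℕ) : poch x (n + 1) = poch x n * (x + n) := by
  rw [poch, poch, Nat.cast_succ, ← add_assoc, Real.Gamma_add_one (by positivity)]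
  ring

lemma poch_eq_prod_range (hx : 0 < x) (n : ℕ) : poch x n = ∏ j ∈ range n, (x + j) := by
  induction n with
  | zero => simp [poch_zero hx]
  | succ n ih => rw [poch_succ hx, prod_range_succ, ih]

lemma poch_le_poch (hx : 0 < x) (hxy : x ≤ y) (n : ℕ) : poch x n ≤ poch y n := by
  rw [poch_eq_prod_range hx, poch_eq_prod_range (hx.trans_le hxy)]
  exact prod_le_prod (fun j _ => by positivity) (fun j _ => by linarith)

lemma GammaSeq_eq_div_poch (hx : 0 < x) (n : ℕ) :
    Real.GammaSeq x n = (n : ℝ) ^ x * n ! / poch x (n + 1) := by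
  rw [Real.GammaSeq, poch_eq_prod_range hx]

lemma poch_succ_div_poch_succ (hx : 0 < x) (hy : 0 < y) {n : ℕ} (hn : n ≠ 0) :
    poch x (n + 1) / poch y (n + 1) =
      (n : ℝ) ^ (x - y) * (Real.GammaSeq y n / Real.GammaSeq x n) := by
  have hn' : (0 : ℝ) < n := by positivity
  rw [GammaSeq_eq_div_poch hx, GammaSeq_eq_div_poch hy, Real.rpow_sub hn']
  have := poch_pos hx (n + 1)
  have := poch_pos hy (n + 1)
  have := Real.rpow_pos_of_pos hn' x
  have := Real.rpow_pos_of_pos hn' y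
  have : (0 : ℝ) < n ! := by positivity
  field_simp

/-- `(x)ₙ / (y)ₙ ~ n^(x - y) Γ(y) / Γ(x)`, by Euler's limit formula for `Γ`. -/
lemma tendsto_poch_div_poch_atTop (hy : 0 < y) (hxy : y < x) :
    Tendsto (fun n => poch x n / poch y n) atTop atTop := by
  have hx := hy.trans hxy
  rw [← tendsto_add_atTop_iff_nat 1]
  have hpow : Tendsto (fun n : ℕ => (n : ℝ) ^ (x - y)) atTop atTop :=
    (tendsto_rpow_atTop (sub_pos.2 hxy)).comp tendsto_natCast_atTop_atTop
  have hratio : Tendsto (fun n => Real.GammaSeq y n / Real.GammaSeq x n) atTop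
      (𝓝 (Real.Gamma y / Real.Gamma x)) :=
    (Real.GammaSeq_tendsto_Gamma y).div (Real.GammaSeq_tendsto_Gamma x)
      (Real.Gamma_pos_of_pos hx).ne'
  refine (hpow.atTop_mul_pos (div_pos (Real.Gamma_pos_of_pos hy) (Real.Gamma_pos_of_pos hx))
    hratio).congr' ?_
  filter_upwards [eventually_ne_atTop 0] with n hn
  exact (poch_succ_div_poch_succ hx hy hn).symm

lemma le_of_forall_poch_le_mul (hy : 0 < y) {c : ℝ}
    (H : ∀ n, poch x n ≤ c * poch y n) : x ≤ y := by
  by_contra! hxy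
  obtain ⟨n, hn⟩ := ((tendsto_poch_div_poch_atTop hy hxy).eventually_gt_atTop c).exists
  rw [lt_div_iff₀ (poch_pos hy n)] at hn
  exact (H n).not_gt hn

end Pochhammer

/-- The sum is comparable to `(x' k)ₙ` for the largest `x' k` carrying positive weight. -/
lemma exists_eq_of_poch_sandwich {ι : Type*} [Fintype ι] {x m₁ m₂ : ℝ} {x' w : ι → ℝ}
    (hx : 0 < x) (hx' : ∀ j, 0 < x' j) (hw : ∀ j, 0 ≤ w j) (hw₀ : ∃ j, w j ≠ 0)
    (hm₁ : 0 < m₁)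
    (hlow : ∀ n, m₁ * poch x n ≤ ∑ j, w j * poch (x' j) n)
    (hup : ∀ n, ∑ j, w j * poch (x' j) n ≤ m₂ * poch x n) :
    ∃ k, x = x' k := by
  classical
  obtain ⟨k, hk, hmax⟩ := (univ.filter fun j => w j ≠ 0).exists_max_image x'
    (by simpa [Finset.Nonempty] using hw₀)
  have hwk : 0 < w k := (hw k).lt_of_ne' (mem_filter.1 hk).2
  have hsum_le : ∀ n, ∑ j, w j * poch (x' j) n ≤ (∑ j, w j) * poch (x' k) n := by
    intro n
    rw [sum_mul]
    refine sum_le_sum fun j _ => ?_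
    rcases eq_or_ne (w j) 0 with hj | hj
    · simp [hj]
    · exact mul_le_mul_of_nonneg_left
        (poch_le_poch (hx' j) (hmax j (mem_filter.2 ⟨mem_univ j, hj⟩)) n) (hw j)
  have hle_sum : ∀ n, w k * poch (x' k) n ≤ ∑ j, w j * poch (x' j) n := fun n =>
    single_le_sum (f := fun j => w j * poch (x' j) n)
      (fun j _ => mul_nonneg (hw j) (poch_pos (hx' j) n).le) (mem_univ k)
  refine ⟨k, le_antisymm ?_ ?_⟩
  · refine le_of_forall_poch_le_mul (hx' k) (c := (∑ j, w j) / m₁) fun n => ?_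
    rw [div_mul_eq_mul_div, le_div_iff₀ hm₁, mul_comm]
    exact (hlow n).trans (hsum_le n)
  · refine le_of_forall_poch_le_mul hx (c := m₂ / w k) fun n => ?_
    rw [div_mul_eq_mul_div, le_div_iff₀ hwk, mul_comm]
    exact (hle_sum n).trans (hup n)

namespace Matrix

variable {ι : Type*} [DecidableEq ι]

lemma smul_diagonal_ofReal_apply_self (c : ℝ) (d : ι → ℝ) (i : ι) :
    (c • diagonal (fun j => (d j : ℂ))) i i = ((c * d i : ℝ) : ℂ) := by
  simp [Complex.real_smul]

variable [Fintype ι]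

lemma mul_diagonal_ofReal_mul_conjTranspose_apply_self {m : Type*} (C : Matrix m ι ℂ)
    (d : ι → ℝ) (i : m) :
    (C * diagonal (fun j => (d j : ℂ)) * Cᴴ) i i =
      ((∑ j, Complex.normSq (C i j) * d j : ℝ) : ℂ) := by
  simp only [mul_apply, diagonal_apply, mul_ite, mul_zero, sum_ite_eq', mem_univ, if_true,
    conjTranspose_apply, Complex.ofReal_sum, Complex.ofReal_mul, Complex.normSq_eq_conj_mul_self]
  refine sum_congr rfl fun j _ => ?_
  simp only [Complex.star_def]
  ring

lemma le_sum_normSq_mul_of_posSemidef {C : Matrix ι ι ℂ} {d d' : ι → ℝ} {c : ℝ}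
    (h : (C * diagonal (fun j => (d' j : ℂ)) * Cᴴ -
      c • diagonal (fun j => (d j : ℂ))).PosSemidef)
    (i : ι) : c * d i ≤ ∑ j, Complex.normSq (C i j) * d' j := by
  have := h.diag_nonneg (i := i)
  rwa [sub_apply, mul_diagonal_ofReal_mul_conjTranspose_apply_self,
    smul_diagonal_ofReal_apply_self, ← Complex.ofReal_sub, Complex.zero_le_real,
    sub_nonneg] at this

lemma sum_normSq_mul_le_of_posSemidef {C : Matrix ι ι ℂ} {d d' : ι → ℝ} {c : ℝ}
    (h : (c • diagonal (fun j => (d j : ℂ)) -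
      C * diagonal (fun j => (d' j : ℂ)) * Cᴴ).PosSemidef)
    (i : ι) : ∑ j, Complex.normSq (C i j) * d' j ≤ c * d i := by
  have := h.diag_nonneg (i := i)
  rwa [sub_apply, mul_diagonal_ofReal_mul_conjTranspose_apply_self,
    smul_diagonal_ofReal_apply_self, ← Complex.ofReal_sub, Complex.zero_le_real,
    sub_nonneg] at this

lemma exists_apply_ne_zero_of_isUnit {R : Type*} [CommRing R] [Nontrivial R] {C : Matrix ι ι R}
    (hC : IsUnit C) (i : ι) : ∃ j, C i j ≠ 0 := by
  obtain ⟨B, hB⟩ := hC.exists_right_inv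
  by_contra! h
  have := congrFun (congrFun hB i) i
  simp [mul_apply, h] at this

variable {𝕜 : Type*} [RCLike 𝕜]

lemma inv_mul_mul_conjTranspose_mul_conjTranspose_inv {C : Matrix ι ι 𝕜} (hC : IsUnit C)
    (B : Matrix ι ι 𝕜) :
    C⁻¹ * (C * B * Cᴴ) * C⁻¹ᴴ = B := by
  have hdet := (isUnit_iff_isUnit_det C).1 hC
  have hdet' : IsUnit Cᴴ.det := (isUnit_iff_isUnit_det _).1 hC.star
  calc C⁻¹ * (C * B * Cᴴ) * C⁻¹ᴴ = (C⁻¹ * C) * B * (Cᴴ * Cᴴ⁻¹) := by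
        simp only [conjTranspose_nonsing_inv, Matrix.mul_assoc]
    _ = B := by
        rw [nonsing_inv_mul _ hdet, mul_nonsing_inv _ hdet', Matrix.one_mul, Matrix.mul_one]

lemma PosSemidef.inv_smul_sub_inv_conj {C A B : Matrix ι ι 𝕜} (hC : IsUnit C) {c : ℝ}
    (hc : 0 < c)
    (h : (C * B * Cᴴ - c • A).PosSemidef) : (c⁻¹ • B - C⁻¹ * A * C⁻¹ᴴ).PosSemidef := by
  convert (h.mul_mul_conjTranspose_same C⁻¹).smul (inv_nonneg.2 hc.le) using 1
  rw [Matrix.mul_sub, Matrix.sub_mul, inv_mul_mul_conjTranspose_mul_conjTranspose_inv hC,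
    smul_sub, Matrix.mul_smul, Matrix.smul_mul, smul_smul, inv_mul_cancel₀ hc.ne', one_smul]

lemma PosSemidef.inv_conj_sub_inv_smul {C A B : Matrix ι ι 𝕜} (hC : IsUnit C) {c : ℝ}
    (hc : 0 < c)
    (h : (c • A - C * B * Cᴴ).PosSemidef) : (C⁻¹ * A * C⁻¹ᴴ - c⁻¹ • B).PosSemidef := by
  convert (h.mul_mul_conjTranspose_same C⁻¹).smul (inv_nonneg.2 hc.le) using 1
  rw [Matrix.mul_sub, Matrix.sub_mul, inv_mul_mul_conjTranspose_mul_conjTranspose_inv hC,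
    smul_sub, Matrix.mul_smul, Matrix.smul_mul, smul_smul, inv_mul_cancel₀ hc.ne', one_smul]

end Matrix

noncomputable def pochDiagonal {ι : Type*} [DecidableEq ι] (x : ι → ℝ) (n : ℕ) :
    Matrix ι ι ℂ :=
  Matrix.diagonal fun j => (poch (x j) n : ℂ)

lemma pochDiagonal_fin_two (a b : ℝ) (n : ℕ) :
    pochDiagonal ![a, b] n = Matrix.diagonal ![(poch a n : ℂ), (poch b n : ℂ)] := by
  unfold pochDiagonal
  congr 1
  ext j
  fin_cases j <;> rfl

lemma exists_eq_of_pochDiagonal_sandwich {ι : Type*} [Fintype ι] [DecidableEq ι]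
    {C : Matrix ι ι ℂ} (hC : IsUnit C) {x x' : ι → ℝ} (hx : ∀ i, 0 < x i) (hx' : ∀ j, 0 < x' j)
    {m₁ m₂ : ℝ} (hm₁ : 0 < m₁)
    (h : ∀ n, (C * pochDiagonal x' n * Cᴴ - m₁ • pochDiagonal x n).PosSemidef ∧
      (m₂ • pochDiagonal x n - C * pochDiagonal x' n * Cᴴ).PosSemidef) (i : ι) :
    ∃ j, x i = x' j := by
  obtain ⟨j, hj⟩ := Matrix.exists_apply_ne_zero_of_isUnit hC i
  exact exists_eq_of_poch_sandwich (hx i) hx' (fun j => Complex.normSq_nonneg _)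
    ⟨j, Complex.normSq_eq_zero.not.2 hj⟩ hm₁
    (fun n => Matrix.le_sum_normSq_mul_of_posSemidef (h n).1 i)
    (fun n => Matrix.sum_normSq_mul_le_of_posSemidef (h n).2 i)

lemma eq_and_eq_or_eq_and_eq_of_forall_mem {α : Type*} {a b c d : α} (ha : a = c ∨ a = d)
    (hb : b = c ∨ b = d) (hc : c = a ∨ c = b) (hd : d = a ∨ d = b) :
    (a = c ∧ b = d) ∨ (a = d ∧ b = c) := by
  rcases ha with rfl | rfl <;> rcases hb with rfl | rfl <;> simp_all [eq_comm]

/-- If `C` is an invertible `2×2` complex matrix with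
`m₁ diag((λ)ₙ,(μ)ₙ) ≤ C diag((λ̃)ₙ,(μ̃)ₙ) Cᴴ ≤ m₂ diag((λ)ₙ,(μ)ₙ)` in the Loewner order for
all `n`, then `{λ, μ} = {λ̃, μ̃}`. -/
theorem stmt10 (C : Matrix (Fin 2) (Fin 2) ℂ) (hC : IsUnit C)
    (l μ l' μ' : ℝ) (hl : 0 < l) (hμ : 0 < μ) (hl' : 0 < l') (hμ' : 0 < μ')
    (m₁ m₂ : ℝ) (hm₁ : 0 < m₁) (hm₂ : 0 < m₂)
    (h : ∀ n : ℕ,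
      (C * Matrix.diagonal ![(poch l' n : ℂ), (poch μ' n : ℂ)] * Cᴴ -
        m₁ • Matrix.diagonal ![(poch l n : ℂ), (poch μ n : ℂ)]).PosSemidef ∧
      (m₂ • Matrix.diagonal ![(poch l n : ℂ), (poch μ n : ℂ)] -
        C * Matrix.diagonal ![(poch l' n : ℂ), (poch μ' n : ℂ)] * Cᴴ).PosSemidef) :
    (l = l' ∧ μ = μ') ∨ (l = μ' ∧ μ = l') := by
  simp only [← pochDiagonal_fin_two] at h
  have hpos : ∀ i, 0 < ![l, μ] i := Fin.forall_fin_two.2 ⟨hl, hμ⟩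
  have hpos' : ∀ i, 0 < ![l', μ'] i := Fin.forall_fin_two.2 ⟨hl', hμ'⟩
  have hmem := exists_eq_of_pochDiagonal_sandwich hC hpos hpos' hm₁ h
  have hmem' := exists_eq_of_pochDiagonal_sandwich (Matrix.isUnit_nonsing_inv_iff.2 hC) hpos'
    hpos (inv_pos.2 hm₂) fun n =>
      ⟨(h n).2.inv_conj_sub_inv_smul hC hm₂, (h n).1.inv_smul_sub_inv_conj hC hm₁⟩
  simp only [Fin.exists_fin_two, Fin.forall_fin_two] at hmem hmem'
  exact eq_and_eq_or_eq_and_eq_of_forall_mem hmem.1 hmem.2 hmem'.1 hmem'.2
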